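/- arXiv:2006.16282 — 5 statements merged into one kernel-verified Lean document; each statement's English description precedes it below -/
import Mathlib

section
/- If M is invertible, A ∈ ℝ^{s×s}, and Δt ≥ 0 is small enough that Δt · ‖A‖ · ‖M⁻¹K‖ < 1, then the matrix I_s ⊗ M + Δt A ⊗ K is invertible. -/
open Matrix Kronecker

attribute [local instance] Matrix.linftyOpNormedRing Matrix.linftyOpNormedAlgebra

lemma kron_nnnorm_le {n s : ℕ} (A : Matrix (Fin s) (Fin s) ℝ)
    (B : Matrix (Fin n) (Fin n) ℝ) : ‖A ⊗ₖ B‖₊ ≤ ‖A‖₊ * ‖B‖₊ := by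
  simp only [Matrix.linfty_opNNNorm_def]
  refine Finset.sup_le fun p _ => ?_
  obtain ⟨i, j⟩ := p
  calc ∑ q : Fin s × Fin n, ‖(A ⊗ₖ B) (i, j) q‖₊
      = (∑ k, ‖A i k‖₊) * (∑ l, ‖B j l‖₊) := by
        rw [Fintype.sum_prod_type]
        simp only [Matrix.kroneckerMap_apply, nnnorm_mul, Finset.sum_mul_sum]
    _ ≤ _ := mul_le_mul'
        (Finset.le_sup (f := fun i => ∑ k, ‖A i k‖₊) (Finset.mem_univ i))
        (Finset.le_sup (f := fun j => ∑ l, ‖B j l‖₊) (Finset.mem_univ j))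

lemma kron_norm_le {n s : ℕ} (A : Matrix (Fin s) (Fin s) ℝ)
    (B : Matrix (Fin n) (Fin n) ℝ) : ‖A ⊗ₖ B‖ ≤ ‖A‖ * ‖B‖ :=
  kron_nnnorm_le A B

/-- If `M` is invertible and `Δt ‖A‖ ‖M⁻¹K‖ < 1` (submultiplicative matrix norm),
then `I ⊗ M + Δt A ⊗ K` is invertible. -/
theorem kron_invertible_small_dt {n s : ℕ} (M K : Matrix (Fin n) (Fin n) ℝ)
    (A : Matrix (Fin s) (Fin s) ℝ) (Δt : ℝ) (hΔt : 0 ≤ Δt)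
    (hM : IsUnit M) (hsmall : Δt * ‖A‖ * ‖M⁻¹ * K‖ < 1) :
    IsUnit ((1 : Matrix (Fin s) (Fin s) ℝ) ⊗ₖ M + Δt • (A ⊗ₖ K)) := by
  have hMdet : IsUnit M.det := (Matrix.isUnit_iff_isUnit_det M).mp hM
  have hMM : M * M⁻¹ = 1 := Matrix.mul_nonsing_inv M hMdet
  set X : Matrix (Fin s × Fin n) (Fin s × Fin n) ℝ := A ⊗ₖ (Δt • (M⁻¹ * K)) with hX
  have hXnorm : ‖X‖ < 1 := by
    calc ‖X‖ ≤ ‖A‖ * ‖Δt • (M⁻¹ * K)‖ := kron_norm_le _ _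
      _ = Δt * ‖A‖ * ‖M⁻¹ * K‖ := by
          rw [norm_smul, Real.norm_of_nonneg hΔt]; ring
      _ < 1 := hsmall
  have hU : IsUnit ((1 : Matrix (Fin s × Fin n) (Fin s × Fin n) ℝ) + X) := by
    have := isUnit_one_sub_of_norm_lt_one (x := -X) (by rwa [norm_neg])
    simpa [sub_neg_eq_add] using this
  have hIM : IsUnit ((1 : Matrix (Fin s) (Fin s) ℝ) ⊗ₖ M) := by
    have h : ((1 : Matrix (Fin s) (Fin s) ℝ) ⊗ₖ M) * (1 ⊗ₖ M⁻¹) = 1 := by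
      rw [← Matrix.mul_kronecker_mul, one_mul, hMM, Matrix.one_kronecker_one]
    exact @isUnit_of_invertible _ _ _ (invertibleOfRightInverse _ _ h)
  have key : ((1 : Matrix (Fin s) (Fin s) ℝ) ⊗ₖ M) * (1 + X) =
      (1 : Matrix (Fin s) (Fin s) ℝ) ⊗ₖ M + Δt • (A ⊗ₖ K) := by
    rw [mul_add, mul_one, hX, ← Matrix.mul_kronecker_mul, one_mul,
      Matrix.mul_smul, ← Matrix.mul_assoc, hMM, Matrix.one_mul,
      ← Matrix.kronecker_smul]
  rw [← key]
  exact hIM.mul hU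
end

section
/- If the Butcher matrix A is lower triangular (a DIRK method) and each matrix M + Δt Aᵢᵢ K is invertible, then the block matrix I_s ⊗ M + Δt A ⊗ K is invertible. -/
open Matrix Kronecker

/-- For a DIRK method (`A` lower triangular), if each `M + Δt Aᵢᵢ K` is invertible
then the block matrix `I ⊗ M + Δt A ⊗ K` is invertible. -/
theorem dirk_block_invertible {n s : ℕ} (M K : Matrix (Fin n) (Fin n) ℝ)
    (A : Matrix (Fin s) (Fin s) ℝ) (hA : ∀ i j, i < j → A i j = 0) (Δt : ℝ)
    (hdiag : ∀ i : Fin s, IsUnit (M + (Δt * A i i) • K)) :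
    IsUnit ((1 : Matrix (Fin s) (Fin s) ℝ) ⊗ₖ M + Δt • (A ⊗ₖ K)) := by
  classical
  set B := (1 : Matrix (Fin s) (Fin s) ℝ) ⊗ₖ M + Δt • (A ⊗ₖ K) with hBdef
  set b : Fin s × Fin n → (Fin s)ᵒᵈ := fun p => OrderDual.toDual p.1 with hbdef
  have hbt : B.BlockTriangular b := by
    intro p q h
    have h' : p.1 < q.1 := h
    have h1 : (1 : Matrix (Fin s) (Fin s) ℝ) p.1 q.1 = 0 := by
      simp [Matrix.one_apply, h'.ne]
    simp [hBdef, Matrix.add_apply, Matrix.kroneckerMap_apply, h1, hA _ _ h']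
  rw [Matrix.isUnit_iff_isUnit_det, hbt.det, isUnit_iff_ne_zero, Finset.prod_ne_zero_iff]
  intro a _
  set c : Fin s := OrderDual.ofDual a with hcdef
  let e : {p : Fin s × Fin n // b p = a} ≃ Fin n :=
    { toFun := fun p => p.1.2
      invFun := fun x => ⟨(c, x), rfl⟩
      left_inv := by rintro ⟨⟨i, x⟩, rfl⟩; rfl
      right_inv := fun x => rfl }
  have hblock : B.toSquareBlock b a
      = (M + (Δt * A c c) • K).submatrix e e := by
    ext p q
    have hp : p.1.1 = c := p.2
    have hq : q.1.1 = c := q.2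
    simp only [Matrix.toSquareBlock_def, Matrix.submatrix_apply, hBdef,
      Matrix.add_apply, Matrix.smul_apply, Matrix.kroneckerMap_apply,
      Matrix.one_apply, hp, hq, if_pos rfl, smul_eq_mul, Matrix.of_apply,
      Equiv.coe_fn_mk, e, if_true]
    simp [mul_assoc]
  rw [hblock, Matrix.det_submatrix_equiv_self]
  exact ((Matrix.isUnit_iff_isUnit_det _).mp (hdiag c)).ne_zero
end

section
/- A Runge–Kutta method satisfying the algebraic stability condition Mᵢⱼ = bᵢ Aᵢⱼ + bⱼ Aⱼᵢ − bᵢ bⱼ ≥ 0 (as a positive semidefinite matrix) with bᵢ ≥ 0, applied to the linear test equation y' = λy with Re(λ) ≤ 0, produces |y^{n+1}| ≤ |yⁿ| for any step size Δt > 0. -/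
/-!
With stage values `gᵢ = yⁿ + Δt Σⱼ Aᵢⱼ kⱼ`, every choice of vectors `kᵢ` in a real inner product
space satisfies the energy identity
`‖y^{n+1}‖² = ‖yⁿ‖² + 2 Δt Σᵢ bᵢ ⟪gᵢ, kᵢ⟫ - Δt² Σᵢⱼ Mᵢⱼ ⟪kᵢ, kⱼ⟫`.
The last sum is nonnegative because `M` is a sum of rank-one matrices `v vᵀ`, and for `y' = λy`
we have `kᵢ = λ gᵢ`, so `⟪gᵢ, kᵢ⟫ = Re λ ‖gᵢ‖² ≤ 0`.
-/

open Matrix Finset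

open scoped InnerProductSpace

theorem Matrix.PosSemidef.sum_mul_inner_nonneg {ι E : Type*} [Fintype ι]
    [SeminormedAddCommGroup E] [InnerProductSpace ℝ E] {M : Matrix ι ι ℝ} (hM : M.PosSemidef)
    (v : ι → E) : 0 ≤ ∑ i, ∑ j, M i j * ⟪v i, v j⟫_ℝ := by
  obtain ⟨m, w, rfl⟩ := Matrix.posSemidef_iff_eq_sum_vecMulVec.mp hM
  have hrankOne : ∀ l, ∑ i, ∑ j, w l i * w l j * ⟪v i, v j⟫_ℝ = ‖∑ i, w l i • v i‖ ^ 2 := by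
    intro l
    simp only [← real_inner_self_eq_norm_sq, sum_inner, inner_sum, real_inner_smul_left,
      real_inner_smul_right]
    refine sum_congr rfl fun i _ => sum_congr rfl fun j _ => ?_
    rw [real_inner_comm]; ring
  calc (0 : ℝ) ≤ ∑ l, ‖∑ i, w l i • v i‖ ^ 2 := sum_nonneg fun l _ => sq_nonneg _
    _ = _ := by
      simp_rw [← hrankOne, Matrix.sum_apply, vecMulVec_apply, star_trivial, sum_mul]
      rw [sum_comm]; refine sum_congr rfl fun i _ => ?_
      rw [sum_comm]

namespace RungeKutta

variable {ι E : Type*} [Fintype ι] [NormedAddCommGroup E] [InnerProductSpace ℝ E]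

def stageValue (A : Matrix ι ι ℝ) (h : ℝ) (y : E) (k : ι → E) (i : ι) : E :=
  y + h • ∑ j, A i j • k j

def step (b : ι → ℝ) (h : ℝ) (y : E) (k : ι → E) : E :=
  y + h • ∑ i, b i • k i

def stabilityMatrix (A : Matrix ι ι ℝ) (b : ι → ℝ) : Matrix ι ι ℝ :=
  of fun i j => b i * A i j + b j * A j i - b i * b j

theorem norm_step_sq (A : Matrix ι ι ℝ) (b : ι → ℝ) (h : ℝ) (y : E) (k : ι → E) :
    ‖step b h y k‖ ^ 2 = ‖y‖ ^ 2 + 2 * h * ∑ i, b i * ⟪stageValue A h y k i, k i⟫_ℝ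
      - h ^ 2 * ∑ i, ∑ j, stabilityMatrix A b i j * ⟪k i, k j⟫_ℝ := by
  set S := ∑ i, b i • k i
  set T := ∑ i, ∑ j, b i * A i j * ⟪k i, k j⟫_ℝ
  have hstep : ‖step b h y k‖ ^ 2 = ‖y‖ ^ 2 + 2 * h * ⟪y, S⟫_ℝ + h ^ 2 * ‖S‖ ^ 2 := by
    rw [step, norm_add_sq_real, real_inner_smul_right, norm_smul, mul_pow, Real.norm_eq_abs,
      sq_abs]
    ring
  have hstage : ∑ i, b i * ⟪stageValue A h y k i, k i⟫_ℝ = ⟪y, S⟫_ℝ + h * T := by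
    simp only [stageValue, S, T, inner_add_left, real_inner_smul_left, real_inner_smul_right,
      sum_inner, inner_sum, mul_add, sum_add_distrib, mul_sum]
    congr 1
    refine sum_congr rfl fun i _ => sum_congr rfl fun j _ => ?_
    rw [real_inner_comm]; ring
  have hS : ‖S‖ ^ 2 = ∑ i, ∑ j, b i * b j * ⟪k i, k j⟫_ℝ := by
    simp only [S, ← real_inner_self_eq_norm_sq, sum_inner, inner_sum, real_inner_smul_left,
      real_inner_smul_right]
    refine sum_congr rfl fun i _ => sum_congr rfl fun j _ => ?_
    rw [real_inner_comm]; ring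
  have hform : ∑ i, ∑ j, stabilityMatrix A b i j * ⟪k i, k j⟫_ℝ = 2 * T - ‖S‖ ^ 2 := by
    have hswap : ∑ i, ∑ j, b j * A j i * ⟪k i, k j⟫_ℝ = T := by
      rw [sum_comm]
      refine sum_congr rfl fun i _ => sum_congr rfl fun j _ => ?_
      rw [real_inner_comm]
    simp only [stabilityMatrix, of_apply, sub_mul, add_mul, sum_sub_distrib, sum_add_distrib,
      hswap, hS]
    ring
  rw [hstep, hstage, hform]
  ring

theorem norm_step_le_of_inner_stageValue_nonpos {A : Matrix ι ι ℝ} {b : ι → ℝ} {h : ℝ} {y : E}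
    {k : ι → E} (hb : ∀ i, 0 ≤ b i) (hM : (stabilityMatrix A b).PosSemidef) (hh : 0 ≤ h)
    (hk : ∀ i, ⟪stageValue A h y k i, k i⟫_ℝ ≤ 0) : ‖step b h y k‖ ≤ ‖y‖ := by
  have hdiss : ∑ i, b i * ⟪stageValue A h y k i, k i⟫_ℝ ≤ 0 :=
    sum_nonpos fun i _ => mul_nonpos_of_nonneg_of_nonpos (hb i) (hk i)
  have hquad := hM.sum_mul_inner_nonneg k
  have hsq : ‖step b h y k‖ ^ 2 ≤ ‖y‖ ^ 2 := by
    rw [norm_step_sq A]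
    nlinarith [mul_nonpos_of_nonneg_of_nonpos hh hdiss, mul_nonneg (sq_nonneg h) hquad]
  exact (pow_le_pow_iff_left₀ (norm_nonneg _) (norm_nonneg _) two_ne_zero).mp hsq

end RungeKutta

theorem Complex.real_inner_mul_self (w z : ℂ) : ⟪z, w * z⟫_ℝ = w.re * ‖z‖ ^ 2 := by
  rw [Complex.inner, mul_assoc, Complex.mul_conj, Complex.re_mul_ofReal, Complex.normSq_eq_norm_sq]

/-- Algebraic stability: if `Mᵢⱼ = bᵢAᵢⱼ + bⱼAⱼᵢ − bᵢbⱼ` is positive semidefinite and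
`bᵢ ≥ 0`, then on the test equation `y' = λy` with `Re λ ≤ 0` the RK method is
contractive: `|y^{n+1}| ≤ |yⁿ|`. -/
theorem algebraically_stable_contractive {s : ℕ} (A : Matrix (Fin s) (Fin s) ℝ)
    (b : Fin s → ℝ) (hb : ∀ i, 0 ≤ b i)
    (hM : (Matrix.of fun i j => b i * A i j + b j * A j i - b i * b j :
        Matrix (Fin s) (Fin s) ℝ).PosSemidef)
    (lam : ℂ) (hlam : lam.re ≤ 0) (Δt : ℝ) (hΔt : 0 < Δt)
    (yn y1 : ℂ) (k : Fin s → ℂ)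
    (hstage : ∀ i, k i = lam * (yn + Δt * ∑ j, A i j * k j))
    (hupdate : y1 = yn + Δt * ∑ i, b i * k i) :
    ‖y1‖ ≤ ‖yn‖ := by
  have hk : ∀ i, k i = lam * RungeKutta.stageValue A Δt yn k i := by
    simpa only [RungeKutta.stageValue, Complex.real_smul] using hstage
  have hy1 : y1 = RungeKutta.step b Δt yn k := by
    simpa only [RungeKutta.step, Complex.real_smul] using hupdate
  rw [hy1]
  refine RungeKutta.norm_step_le_of_inner_stageValue_nonpos hb hM hΔt.le fun i => ?_
  rw [hk i, Complex.real_inner_mul_self]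
  exact mul_nonpos_of_nonpos_of_nonneg hlam (sq_nonneg _)
end

section
/- If a Runge–Kutta method satisfies bᵢ Aᵢⱼ + bⱼ Aⱼᵢ = bᵢ bⱼ for all i, j, then applied to any linear ODE y' = L y where S L + Lᵀ S = 0 for a symmetric matrix S, the quadratic form Q(y) = yᵀ S y is exactly conserved: Q(y^{n+1}) = Q(yⁿ) for any step size (assuming the stage equations are solvable). -/
open Matrix

/-- If `bᵢAᵢⱼ + bⱼAⱼᵢ = bᵢbⱼ`, the RK method applied to `y' = Ly` with
`SL + LᵀS = 0` (`S` symmetric) conserves the quadratic form `yᵀSy` exactly. -/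
theorem rk_conserves_quadratic_invariant {s n : ℕ} (A : Matrix (Fin s) (Fin s) ℝ)
    (b : Fin s → ℝ) (hAb : ∀ i j, b i * A i j + b j * A j i = b i * b j)
    (L S : Matrix (Fin n) (Fin n) ℝ) (hS : S.IsSymm)
    (hSL : S * L + Lᵀ * S = 0) (Δt : ℝ)
    (yn y1 : Fin n → ℝ) (k : Fin s → Fin n → ℝ)
    (hstage : ∀ i, k i = L *ᵥ (yn + Δt • ∑ j, A i j • k j))
    (hupdate : y1 = yn + Δt • ∑ i, b i • k i) :
    y1 ⬝ᵥ (S *ᵥ y1) = yn ⬝ᵥ (S *ᵥ yn) := by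
  classical
  set B : (Fin n → ℝ) → (Fin n → ℝ) → ℝ := fun u v => u ⬝ᵥ (S *ᵥ v) with hBdef
  -- symmetry of B
  have hvS : ∀ u : Fin n → ℝ, u ᵥ* S = S *ᵥ u := by
    intro u
    conv_lhs => rw [← hS.eq]
    rw [vecMul_transpose]
  have hBsymm : ∀ u v, B u v = B v u := by
    intro u v
    simp only [hBdef]
    rw [dotProduct_mulVec, hvS, dotProduct_comm]
  -- skew property
  have hLS : Lᵀ * S = -(S * L) := by
    have h := hSL; rw [add_comm] at h; exact eq_neg_of_add_eq_zero_left h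
  have hBskew : ∀ u v, B (L *ᵥ u) v = - B u (L *ᵥ v) := by
    intro u v
    simp only [hBdef]
    rw [← vecMul_transpose, ← dotProduct_mulVec, mulVec_mulVec, hLS, neg_mulVec,
      dotProduct_neg, ← mulVec_mulVec]
  -- bilinearity
  have hB_add_right : ∀ u v w, B u (v + w) = B u v + B u w := by
    intro u v w; simp only [hBdef]; rw [mulVec_add, dotProduct_add]
  have hB_smul_right : ∀ (c : ℝ) u v, B u (c • v) = c * B u v := by
    intro c u v; simp only [hBdef]; rw [mulVec_smul, dotProduct_smul, smul_eq_mul]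
  have hB_sum_right : ∀ (u : Fin n → ℝ) (f : Fin s → Fin n → ℝ),
      B u (∑ i, f i) = ∑ i, B u (f i) := by
    intro u f
    simp only [hBdef]
    have h1 : S *ᵥ (∑ i, f i) = ∑ i, S *ᵥ f i := by
      simpa only [mulVecLin_apply] using map_sum S.mulVecLin f Finset.univ
    rw [h1]
    simp only [dotProduct, Finset.sum_apply, Finset.mul_sum]
    rw [Finset.sum_comm]
  have hB_smul_left : ∀ (c : ℝ) (u v : Fin n → ℝ), B (c • u) v = c * B u v := by
    intro c u v; rw [hBsymm, hB_smul_right, hBsymm]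
  have hB_add_left : ∀ u v w, B (u + v) w = B u w + B v w := by
    intro u v w; rw [hBsymm, hB_add_right, hBsymm w u, hBsymm w v]
  have hB_sum_left : ∀ (v : Fin n → ℝ) (f : Fin s → Fin n → ℝ),
      B (∑ i, f i) v = ∑ i, B (f i) v := by
    intro v f
    rw [hBsymm, hB_sum_right]
    exact Finset.sum_congr rfl fun i _ => hBsymm _ _
  -- stage orthogonality: B (k i) (Y i) = 0
  have hkY : ∀ i, B (k i) (yn + Δt • ∑ j, A i j • k j) = 0 := by
    intro i
    have h1 : B (k i) (yn + Δt • ∑ j, A i j • k j)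
        = - B (yn + Δt • ∑ j, A i j • k j) (k i) := by
      conv_lhs => rw [hstage i]
      rw [hBskew, ← hstage i]
    rw [hBsymm] at h1
    rw [hBsymm]
    linarith
  have hkyn : ∀ i, B (k i) yn = -(Δt * ∑ j, A i j * B (k i) (k j)) := by
    intro i
    have h := hkY i
    rw [hB_add_right, hB_smul_right, hB_sum_right] at h
    simp only [hB_smul_right] at h
    linarith
  set K : Fin n → ℝ := ∑ i, b i • k i with hKdef
  have expand : B y1 y1 = B yn yn + 2 * Δt * B K yn + Δt ^ 2 * B K K := by
    rw [hupdate, hB_add_right, hB_add_left, hB_add_left, hB_smul_left, hB_smul_right,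
      hB_smul_left, hB_smul_right, hBsymm yn K]
    ring
  have hKyn : B K yn = -(Δt * ∑ i, ∑ j, b i * (A i j * B (k i) (k j))) := by
    rw [hKdef, hB_sum_left]
    have h1 : ∀ i : Fin s, B (b i • k i) yn = -(Δt * ∑ j, b i * (A i j * B (k i) (k j))) := by
      intro i
      rw [hB_smul_left, hkyn i, mul_neg, neg_inj, Finset.mul_sum, Finset.mul_sum,
        Finset.mul_sum]
      exact Finset.sum_congr rfl fun j _ => by ring
    rw [Finset.sum_congr rfl fun i _ => h1 i]
    simp only [Finset.mul_sum, Finset.sum_neg_distrib]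
  have hKK : B K K = ∑ i, ∑ j, b i * (b j * B (k i) (k j)) := by
    rw [hKdef]
    simp only [hB_sum_left, hB_smul_left, hB_sum_right, hB_smul_right, Finset.mul_sum]
  have swap : ∑ i, ∑ j, b i * (A i j * B (k i) (k j))
      = ∑ i, ∑ j, b j * (A j i * B (k i) (k j)) := by
    rw [Finset.sum_comm]
    exact Finset.sum_congr rfl fun i _ => Finset.sum_congr rfl fun j _ => by
      rw [hBsymm (k j) (k i)]
  have hbb : ∑ i, ∑ j, b i * (b j * B (k i) (k j))
      = (∑ i, ∑ j, b i * (A i j * B (k i) (k j)))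
        + ∑ i, ∑ j, b j * (A j i * B (k i) (k j)) := by
    rw [← Finset.sum_add_distrib]
    refine Finset.sum_congr rfl fun i _ => ?_
    rw [← Finset.sum_add_distrib]
    refine Finset.sum_congr rfl fun j _ => ?_
    linear_combination (-(B (k i) (k j))) * (hAb i j)
  show B y1 y1 = B yn yn
  rw [expand, hKyn, hKK, hbb, ← swap]
  ring
end

section
/- For any Runge–Kutta tableau with invertible Butcher matrix A and any real Δt > 0, if M is symmetric positive definite and K symmetric positive semidefinite, and all eigenvalues of A have positive real part, then the block matrix I ⊗ M + Δt A ⊗ K is invertible. -/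
open Matrix Kronecker
open scoped MatrixOrder ComplexOrder

/-!
Writing `M = S²` with `S = √M` and diagonalising the positive semidefinite matrix `S⁻¹ K S⁻¹`
by a unitary `U`, the invertible matrix `P = S U` gives `M = P Pᴴ` and `K = P D Pᴴ` with `D`
diagonal and nonnegative. Then `I ⊗ M + Δt A ⊗ K = (I ⊗ P) (I ⊗ I + Δt A ⊗ D) (I ⊗ Pᴴ)`, and the
middle factor is block diagonal with blocks `I + Δt dₖ A`. For `dₖ > 0` such a block is singular
only if `-1 / (Δt dₖ) < 0` is an eigenvalue of `A`, which the hypothesis on the spectrum of `A`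
excludes.
-/

lemma spectrum.isUnit_one_add_smul_of_forall_pos {𝕜 A : Type*} [Field 𝕜] [LinearOrder 𝕜]
    [IsStrictOrderedRing 𝕜] [Ring A] [Algebra 𝕜 A] {a : A} (ha : ∀ r ∈ spectrum 𝕜 a, 0 < r)
    {c : 𝕜} (hc : 0 ≤ c) : IsUnit (1 + c • a) := by
  rcases hc.eq_or_lt with rfl | hc
  · simp
  have hres : IsUnit (algebraMap 𝕜 A (-c⁻¹) - a) :=
    spectrum.notMem_iff.1 fun h => (ha _ h).not_ge (by simp [hc.le])
  have hfactor : 1 + c • a = algebraMap 𝕜 A (-c) * (algebraMap 𝕜 A (-c⁻¹) - a) := by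
    rw [mul_sub, ← map_mul, neg_mul_neg, mul_inv_cancel₀ hc.ne', map_one, ← Algebra.smul_def,
      neg_smul, sub_neg_eq_add]
  rw [hfactor]
  exact ((isUnit_iff_ne_zero.2 (neg_ne_zero.2 hc.ne')).map _).mul hres

namespace Matrix

variable {ι : Type*} [Fintype ι] [DecidableEq ι]

lemma map_mem_spectrum_map {K L : Type*} [Field K] [CommRing L] [Nontrivial L] (f : K →+* L)
    {A : Matrix ι ι K} {r : K} (hr : r ∈ spectrum K A) : f r ∈ spectrum L (A.map f) := by
  apply mem_spectrum_of_isRoot_charpoly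
  rw [charpoly_map]
  exact (mem_spectrum_iff_isRoot_charpoly.1 hr).map

lemma isUnit_blockDiagonal_iff {m R : Type*} [Fintype m] [DecidableEq m] [CommRing R]
    {B : ι → Matrix m m R} : IsUnit (blockDiagonal B) ↔ ∀ k, IsUnit (B k) := by
  simp only [isUnit_iff_isUnit_det, det_blockDiagonal, IsUnit.prod_univ_iff]

lemma isUnit_one_kronecker {m R : Type*} [Fintype m] [DecidableEq m] [CommRing R]
    {P : Matrix m m R} (hP : IsUnit P) : IsUnit ((1 : Matrix ι ι R) ⊗ₖ P) := by
  rw [isUnit_iff_isUnit_det, det_kronecker, det_one, one_pow, one_mul]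
  exact ((isUnit_iff_isUnit_det P).1 hP).pow _

lemma one_kronecker_add_smul_kronecker_eq_mul_blockDiagonal_mul {m R : Type*} [Fintype m]
    [DecidableEq m] [CommRing R] (A : Matrix ι ι R) (P Q : Matrix m m R) (d : m → R) (t : R) :
    (1 : Matrix ι ι R) ⊗ₖ (P * Q) + t • (A ⊗ₖ (P * diagonal d * Q)) =
      ((1 : Matrix ι ι R) ⊗ₖ P) * blockDiagonal (fun k => 1 + (t * d k) • A) *
        ((1 : Matrix ι ι R) ⊗ₖ Q) := by
  have hblock : blockDiagonal (fun k => 1 + (t * d k) • A) =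
      (1 : Matrix ι ι R) ⊗ₖ (1 : Matrix m m R) + t • (A ⊗ₖ diagonal d) := by
    rw [kronecker_diagonal, one_kronecker_one, ← blockDiagonal_one, ← blockDiagonal_smul,
      ← blockDiagonal_add]
    congr 1
    ext k : 1
    simp only [mul_smul, op_smul_eq_smul, Pi.add_apply, Pi.one_apply, Pi.smul_apply]
  rw [hblock, mul_add, add_mul, mul_smul_comm, smul_mul_assoc, ← mul_kronecker_mul,
    ← mul_kronecker_mul, ← mul_kronecker_mul, ← mul_kronecker_mul]
  simp only [mul_one, one_mul]

variable {𝕜 : Type*} [RCLike 𝕜]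

lemma PosDef.exists_isUnit_diagonalize_posSemidef {M K : Matrix ι ι 𝕜} (hM : M.PosDef)
    (hK : K.PosSemidef) : ∃ (P : Matrix ι ι 𝕜) (d : ι → ℝ), IsUnit P ∧ (∀ i, 0 ≤ d i) ∧
      M = P * Pᴴ ∧ K = P * diagonal (RCLike.ofReal ∘ d) * Pᴴ := by
  set S := CFC.sqrt M
  have hSS : S * S = M := CFC.sqrt_mul_sqrt_self M hM.posSemidef.nonneg
  have hS : Sᴴ = S := (CFC.sqrt_nonneg M).posSemidef.isHermitian.eq
  have hSunit : IsUnit S := isUnit_of_mul_isUnit_left (hSS ▸ hM.isUnit)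
  have hSdet : IsUnit S.det := (isUnit_iff_isUnit_det S).1 hSunit
  have hK' : (S⁻¹ * K * S⁻¹).PosSemidef := by
    simpa [conjTranspose_nonsing_inv, hS] using hK.mul_mul_conjTranspose_same S⁻¹
  set U : Matrix ι ι 𝕜 := (hK'.isHermitian.eigenvectorUnitary : Matrix ι ι 𝕜)
  set D : Matrix ι ι 𝕜 := diagonal (RCLike.ofReal ∘ hK'.isHermitian.eigenvalues)
  have hspec : S⁻¹ * K * S⁻¹ = U * D * Uᴴ := hK'.isHermitian.spectral_theorem
  have hU : U * Uᴴ = 1 := Unitary.mul_star_self_of_mem hK'.isHermitian.eigenvectorUnitary.2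
  refine ⟨S * U, hK'.isHermitian.eigenvalues, hSunit.mul (IsUnit.of_mul_eq_one _ hU),
    hK'.eigenvalues_nonneg, ?_, ?_⟩
  · rw [conjTranspose_mul, hS, mul_assoc, ← mul_assoc U, hU, one_mul, hSS]
  · calc K = S * (S⁻¹ * K * S⁻¹) * S := by
          simp only [← mul_assoc, nonsing_inv_mul_cancel_right _ _ hSdet,
            mul_nonsing_inv _ hSdet, one_mul]
      _ = S * (U * D * Uᴴ) * S := congrArg (fun X => S * X * S) hspec
      _ = S * U * D * (S * U)ᴴ := by rw [conjTranspose_mul, hS]; simp only [mul_assoc]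

end Matrix

/-- If all eigenvalues of the Butcher matrix `A` have positive real part, `M` is SPD,
`K` is symmetric PSD, and `Δt > 0`, then `I ⊗ M + Δt A ⊗ K` is invertible. -/
theorem implicit_rk_block_invertible {s n : ℕ}
    (A : Matrix (Fin s) (Fin s) ℝ)
    (hA : ∀ μ ∈ spectrum ℂ (A.map (Complex.ofReal ·)), 0 < μ.re)
    (M K : Matrix (Fin n) (Fin n) ℝ) (hM : M.PosDef) (hK : K.PosSemidef)
    (Δt : ℝ) (hΔt : 0 < Δt) :
    IsUnit ((1 : Matrix (Fin s) (Fin s) ℝ) ⊗ₖ M + Δt • (A ⊗ₖ K)) := by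
  obtain ⟨P, d, hP, hd, rfl, rfl⟩ := hM.exists_isUnit_diagonalize_posSemidef hK
  have hA_real : ∀ r ∈ spectrum ℝ A, 0 < r := fun r hr => by
    simpa using hA _ (map_mem_spectrum_map Complex.ofRealHom hr)
  rw [one_kronecker_add_smul_kronecker_eq_mul_blockDiagonal_mul]
  refine ((isUnit_one_kronecker hP).mul (isUnit_blockDiagonal_iff.2 fun k => ?_)).mul
    (isUnit_one_kronecker hP.star)
  exact spectrum.isUnit_one_add_smul_of_forall_pos hA_real (mul_nonneg hΔt.le (hd k))
end
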